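/- arXiv:2107.10610 — 6 statements merged into one kernel-verified Lean document; each statement's English description precedes it below -/
import Mathlib

section
/- Let t ≥ 2 and let p, q, r ≥ 0 be integers with r ≤ t. Let G be a K_{2,r}^{p,q}-free graph, and let v and w be two distinct vertices of G with deg(v) ≥ p+q+r+1 and deg(w) ≥ p+r+1. Then v and w have at most t−1 common neighbors. -/
open SimpleGraph Finset

/-- `G` contains a copy of `F`, i.e. `G` has a subgraph isomorphic to `F`. -/
def ContainsCopy {α β : Type*} (F : SimpleGraph α) (G : SimpleGraph β) : Prop :=
  ∃ f : α → β, Function.Injective f ∧ ∀ ⦃a b⦄, F.Adj a b → G.Adj (f a) (f b)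

/-- `G` is `F`-free: it contains no subgraph isomorphic to `F`. -/
def IsFFree {α β : Type*} (F : SimpleGraph α) (G : SimpleGraph β) : Prop :=
  ¬ ContainsCopy F G

/-- `𝒩(H,G)`: the number of subgraphs of `G` isomorphic to `H`. -/
noncomputable def copyCount {α β : Type*} (H : SimpleGraph α) (G : SimpleGraph β) : ℕ :=
  Nat.card {G' : G.Subgraph // Nonempty (G'.coe ≃g H)}

/-- The number of embeddings of `H` into `G` (injective, edge-preserving maps). -/
noncomputable def embCount {α β : Type*} (H : SimpleGraph α) (G : SimpleGraph β) : ℕ :=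
  Nat.card {f : α → β // Function.Injective f ∧ ∀ ⦃a b⦄, H.Adj a b → G.Adj (f a) (f b)}

/-- `ex(n,H,F)`: the maximum number of copies of `H` in an `F`-free graph on `n` vertices. -/
noncomputable def exNum {α β : Type*} (n : ℕ) (H : SimpleGraph α) (F : SimpleGraph β) : ℕ :=
  sSup {k | ∃ G : SimpleGraph (Fin n), IsFFree F G ∧ copyCount H G = k}

/-- The defining relation of `K_{2,r}^{p,q}`: the two vertices `u = inl 0`, `v = inl 1` of the
small side, `r` vertices joined to both, `p` vertices joined only to `u`, `q` vertices joined
only to `v`. -/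
def K2rpqRel (p q r : ℕ) :
    (Fin 2 ⊕ (Fin r ⊕ Fin p ⊕ Fin q)) → (Fin 2 ⊕ (Fin r ⊕ Fin p ⊕ Fin q)) → Prop
  | Sum.inl _, Sum.inr (Sum.inl _) => True
  | Sum.inl i, Sum.inr (Sum.inr (Sum.inl _)) => i = 0
  | Sum.inl i, Sum.inr (Sum.inr (Sum.inr _)) => i = 1
  | _, _ => False

/-- The graph `K_{2,r}^{p,q}` obtained from `K_{2,r}` by adding `p` pendant vertices at `u`
and `q` pendant vertices at `v`, where `u,v` form the side of size 2. -/
def K2rpq (p q r : ℕ) : SimpleGraph (Fin 2 ⊕ (Fin r ⊕ Fin p ⊕ Fin q)) :=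
  SimpleGraph.fromRel (K2rpqRel p q r)

/-- The final set `B` of the greedy partition process: start with `B` the set of vertices of
degree `≠ 2`, and repeatedly move to `A` any non-leaf vertex of `B` with at most two neighbors
in `B`.  The result is the largest subset `S` of the initial `B` in which every non-leaf vertex
has at least three neighbors inside `S`. -/
def finalB {V : Type*} [Fintype V] (T : SimpleGraph V) [DecidableRel T.Adj] : Set V :=
  {v | ∃ S : Set V, v ∈ S ∧ (∀ u ∈ S, T.degree u ≠ 2) ∧
    (∀ u ∈ S, T.degree u ≠ 1 → 3 ≤ Nat.card {w : V // w ∈ S ∧ T.Adj u w})}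

/-- A tree is nice if it has at least 3 vertices and every vertex of the final set `B` is a
leaf. -/
def IsNice {V : Type*} [Fintype V] (T : SimpleGraph V) [DecidableRel T.Adj] : Prop :=
  3 ≤ Fintype.card V ∧ ∀ v ∈ finalB T, T.degree v = 1

/-- The graph on `Fin n` consisting of `⌊n/m⌋` pairwise disjoint copies of `K_m`
(on consecutive blocks of `m` vertices) together with `n - m⌊n/m⌋` isolated vertices. -/
def cliqueBlocks (n m : ℕ) : SimpleGraph (Fin n) :=
  SimpleGraph.fromRel (fun a b =>
    (a : ℕ) / m = (b : ℕ) / m ∧ (a : ℕ) < m * (n / m) ∧ (b : ℕ) < m * (n / m))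

theorem stmt7 {V : Type*} [Fintype V] [DecidableEq V]
    (G : SimpleGraph V) [DecidableRel G.Adj]
    (t p q r : ℕ) (ht : 2 ≤ t) (hr : r ≤ t)
    (hfree : IsFFree (K2rpq p q r) G)
    (v w : V) (hvw : v ≠ w)
    (hv : p + q + r + 1 ≤ G.degree v) (hw : p + r + 1 ≤ G.degree w) :
    (G.neighborFinset v ∩ G.neighborFinset w).card ≤ t - 1 := by
  by_contra hcon
  push_neg at hcon
  apply hfree
  have ht' : r ≤ (G.neighborFinset v ∩ G.neighborFinset w).card := by omega
  obtain ⟨R, hR, hRcard⟩ := Finset.exists_subset_card_eq ht'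
  have hPle : p ≤ ((G.neighborFinset w) \ (insert v R)).card := by
    have h1 : (insert v R).card ≤ r + 1 := by
      have := Finset.card_insert_le v R; omega
    have h2 := Finset.le_card_sdiff (insert v R) (G.neighborFinset w)
    rw [SimpleGraph.card_neighborFinset_eq_degree] at h2
    omega
  obtain ⟨P, hP, hPcard⟩ := Finset.exists_subset_card_eq hPle
  have hQle : q ≤ ((G.neighborFinset v) \ (insert w (R ∪ P))).card := by
    have h1 : (insert w (R ∪ P)).card ≤ r + p + 1 := by
      have h3 := Finset.card_insert_le w (R ∪ P)
      have h4 := Finset.card_union_le R P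
      omega
    have h2 := Finset.le_card_sdiff (insert w (R ∪ P)) (G.neighborFinset v)
    rw [SimpleGraph.card_neighborFinset_eq_degree] at h2
    omega
  obtain ⟨Q, hQ, hQcard⟩ := Finset.exists_subset_card_eq hQle
  -- enumerations
  let eR : Fin r ≃ {x // x ∈ R} := (finCongr hRcard.symm).trans R.equivFin.symm
  let eP : Fin p ≃ {x // x ∈ P} := (finCongr hPcard.symm).trans P.equivFin.symm
  let eQ : Fin q ≃ {x // x ∈ Q} := (finCongr hQcard.symm).trans Q.equivFin.symm
  let f : (Fin 2 ⊕ (Fin r ⊕ Fin p ⊕ Fin q)) → V :=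
    Sum.elim (fun i => if i = 0 then w else v)
      (Sum.elim (fun i => (eR i : V)) (Sum.elim (fun i => (eP i : V)) (fun i => (eQ i : V))))
  -- membership facts
  have hRv : ∀ i : Fin r, G.Adj v (eR i : V) := fun i => by
    have := hR (eR i).2; rw [Finset.mem_inter] at this
    exact (SimpleGraph.mem_neighborFinset _ _ _).1 this.1
  have hRw : ∀ i : Fin r, G.Adj w (eR i : V) := fun i => by
    have := hR (eR i).2; rw [Finset.mem_inter] at this
    exact (SimpleGraph.mem_neighborFinset _ _ _).1 this.2
  have hPw : ∀ i : Fin p, G.Adj w (eP i : V) := fun i => by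
    have := hP (eP i).2; rw [Finset.mem_sdiff] at this
    exact (SimpleGraph.mem_neighborFinset _ _ _).1 this.1
  have hPnot : ∀ i : Fin p, (eP i : V) ≠ v ∧ (eP i : V) ∉ R := fun i => by
    have := hP (eP i).2; rw [Finset.mem_sdiff, Finset.mem_insert] at this
    push_neg at this; exact this.2
  have hQv : ∀ i : Fin q, G.Adj v (eQ i : V) := fun i => by
    have := hQ (eQ i).2; rw [Finset.mem_sdiff] at this
    exact (SimpleGraph.mem_neighborFinset _ _ _).1 this.1
  have hQnot : ∀ i : Fin q, (eQ i : V) ≠ w ∧ (eQ i : V) ∉ R ∧ (eQ i : V) ∉ P := fun i => by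
    have := hQ (eQ i).2; rw [Finset.mem_sdiff, Finset.mem_insert, Finset.mem_union] at this
    push_neg at this; exact ⟨this.2.1, this.2.2⟩
  have hRnv : ∀ i : Fin r, (eR i : V) ≠ v := fun i h => G.irrefl (h ▸ hRv i)
  have hRnw : ∀ i : Fin r, (eR i : V) ≠ w := fun i h => G.irrefl (h ▸ hRw i)
  have hPnw : ∀ i : Fin p, (eP i : V) ≠ w := fun i h => G.irrefl (h ▸ hPw i)
  have hQnv : ∀ i : Fin q, (eQ i : V) ≠ v := fun i h => G.irrefl (h ▸ hQv i)
  have hRmem : ∀ i : Fin r, (eR i : V) ∈ R := fun i => (eR i).2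
  have hPmem : ∀ i : Fin p, (eP i : V) ∈ P := fun i => (eP i).2
  have hQmem : ∀ i : Fin q, (eQ i : V) ∈ Q := fun i => (eQ i).2
  have hQR : ∀ (i : Fin q) (j : Fin r), (eQ i : V) ≠ (eR j : V) := fun i j h =>
    (hQnot i).2.1 (h ▸ hRmem j)
  have hQP : ∀ (i : Fin q) (j : Fin p), (eQ i : V) ≠ (eP j : V) := fun i j h =>
    (hQnot i).2.2 (h ▸ hPmem j)
  have hPR : ∀ (i : Fin p) (j : Fin r), (eP i : V) ≠ (eR j : V) := fun i j h =>
    (hPnot i).2 (h ▸ hRmem j)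
  have heRinj : Function.Injective (fun i => (eR i : V)) :=
    Subtype.coe_injective.comp eR.injective
  have hePinj : Function.Injective (fun i => (eP i : V)) :=
    Subtype.coe_injective.comp eP.injective
  have heQinj : Function.Injective (fun i => (eQ i : V)) :=
    Subtype.coe_injective.comp eQ.injective
  refine ⟨f, ?_, ?_⟩
  · rintro (i | j | j | j) (i' | j' | j' | j') h <;> simp only [f, Sum.elim_inl, Sum.elim_inr] at h
    · congr 1
      fin_cases i <;> fin_cases i' <;> simp_all
    · exfalso
      split_ifs at h
      · exact hRnw j' h.symm
      · exact hRnv j' h.symm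
    · exfalso
      split_ifs at h
      · exact hPnw j' h.symm
      · exact (hPnot j').1 h.symm
    · exfalso
      split_ifs at h
      · exact (hQnot j').1 h.symm
      · exact hQnv j' h.symm
    · exfalso; split_ifs at h
      · exact hRnw j h
      · exact hRnv j h
    · rw [heRinj h]
    · exact absurd h.symm (hPR j' j)
    · exact absurd h.symm (hQR j' j)
    · exfalso; split_ifs at h
      · exact hPnw j h
      · exact (hPnot j).1 h
    · exact absurd h (hPR j j')
    · rw [hePinj h]
    · exact absurd h.symm (hQP j' j)
    · exfalso; split_ifs at h
      · exact (hQnot j).1 h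
      · exact hQnv j h
    · exact absurd h (hQR j j')
    · exact absurd h (hQP j j')
    · rw [heQinj h]
  · rintro a b hab
    rw [K2rpq, SimpleGraph.fromRel_adj] at hab
    obtain ⟨hne, hrel | hrel⟩ := hab
    · rcases a with i | j | j | j <;> rcases b with i' | j' | j' | j' <;>
        simp only [K2rpqRel] at hrel
      · by_cases hi : i = 0
        · simp only [f, Sum.elim_inl, Sum.elim_inr, hi, if_pos]
          exact hRw j'
        · have : i = 1 := by omega
          simp only [f, Sum.elim_inl, Sum.elim_inr, hi, if_neg]
          exact hRv j'
      · simp only [f, Sum.elim_inl, Sum.elim_inr, hrel, if_pos rfl]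
        exact hPw j'
      · have : i ≠ 0 := by rw [hrel]; decide
        simp only [f, Sum.elim_inl, Sum.elim_inr, this, if_neg]
        exact hQv j'
    · rcases a with i | j | j | j <;> rcases b with i' | j' | j' | j' <;>
        simp only [K2rpqRel] at hrel
      · refine G.adj_symm ?_
        by_cases hi : i' = 0
        · simp only [f, Sum.elim_inl, Sum.elim_inr, hi, if_pos]
          exact hRw j
        · simp only [f, Sum.elim_inl, Sum.elim_inr, hi, if_neg]
          exact hRv j
      · refine G.adj_symm ?_
        simp only [f, Sum.elim_inl, Sum.elim_inr, hrel, if_pos rfl]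
        exact hPw j
      · refine G.adj_symm ?_
        have : i' ≠ 0 := by rw [hrel]; decide
        simp only [f, Sum.elim_inl, Sum.elim_inr, this, if_neg]
        exact hQv j
end

section
/- Let t ≥ 2 and let p, q, r ≥ 0 be integers with r ≤ t. Let G be a K_{2,r}^{p,q}-free graph, and let v and w be two nonadjacent distinct vertices of G with deg(v) ≥ p+q+r and deg(w) ≥ p+r. Then v and w have at most t−1 common neighbors. -/
open SimpleGraph Finset

lemma exists_fin_map_aux {V : Type*} (s : Finset V) {n : ℕ} (h : s.card = n) :
    ∃ f : Fin n → V, Function.Injective f ∧ ∀ i, f i ∈ s := by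
  let e : Fin n ≃ s := (finCongr h.symm).trans s.equivFin.symm
  exact ⟨fun i => (e i : V), Subtype.val_injective.comp e.injective, fun i => (e i).2⟩

theorem stmt8 {V : Type*} [Fintype V] [DecidableEq V]
    (G : SimpleGraph V) [DecidableRel G.Adj]
    (t p q r : ℕ) (ht : 2 ≤ t) (hr : r ≤ t)
    (hfree : IsFFree (K2rpq p q r) G)
    (v w : V) (hvw : v ≠ w) (hadj : ¬ G.Adj v w)
    (hv : p + q + r ≤ G.degree v) (hw : p + r ≤ G.degree w) :
    (G.neighborFinset v ∩ G.neighborFinset w).card ≤ t - 1 := by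
  by_contra hcon
  push_neg at hcon
  have htc : t ≤ (G.neighborFinset v ∩ G.neighborFinset w).card := by omega
  obtain ⟨C, hCsub, hCcard⟩ := Finset.exists_subset_card_eq (hr.trans htc)
  have hCv : ∀ x ∈ C, G.Adj v x := fun x hx =>
    (SimpleGraph.mem_neighborFinset ..).mp (Finset.mem_inter.mp (hCsub hx)).1
  have hCw : ∀ x ∈ C, G.Adj w x := fun x hx =>
    (SimpleGraph.mem_neighborFinset ..).mp (Finset.mem_inter.mp (hCsub hx)).2
  have hCsubw : C ⊆ G.neighborFinset w := fun x hx =>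
    (SimpleGraph.mem_neighborFinset ..).mpr (hCw x hx)
  have hP' : p ≤ (G.neighborFinset w \ C).card := by
    rw [Finset.card_sdiff_of_subset hCsubw, hCcard, SimpleGraph.card_neighborFinset_eq_degree]
    omega
  obtain ⟨P, hPsub, hPcard⟩ := Finset.exists_subset_card_eq hP'
  have hPw : ∀ x ∈ P, G.Adj w x ∧ x ∉ C := by
    intro x hx
    have := Finset.mem_sdiff.mp (hPsub hx)
    exact ⟨(SimpleGraph.mem_neighborFinset ..).mp this.1, this.2⟩
  have hQ' : q ≤ (G.neighborFinset v \ (C ∪ P)).card := by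
    have h1 : (C ∪ P).card ≤ r + p :=
      le_trans (Finset.card_union_le _ _) (by omega)
    have h2 := Finset.le_card_sdiff (C ∪ P) (G.neighborFinset v)
    have h3 : (G.neighborFinset v).card = G.degree v :=
      SimpleGraph.card_neighborFinset_eq_degree ..
    omega
  obtain ⟨Q, hQsub, hQcard⟩ := Finset.exists_subset_card_eq hQ'
  have hQv : ∀ x ∈ Q, G.Adj v x ∧ x ∉ C ∧ x ∉ P := by
    intro x hx
    have := Finset.mem_sdiff.mp (hQsub hx)
    have h2 := this.2
    rw [Finset.mem_union] at h2
    push_neg at h2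
    exact ⟨(SimpleGraph.mem_neighborFinset ..).mp this.1, h2.1, h2.2⟩
  obtain ⟨fC, hfCinj, hfC⟩ := exists_fin_map_aux C hCcard
  obtain ⟨fP, hfPinj, hfP⟩ := exists_fin_map_aux P hPcard
  obtain ⟨fQ, hfQinj, hfQ⟩ := exists_fin_map_aux Q hQcard
  have hwadj : ¬ G.Adj w v := fun h => hadj h.symm
  -- no image touches v or w
  have hnev : ∀ x, (x ∈ C ∨ x ∈ P ∨ x ∈ Q) → x ≠ v ∧ x ≠ w := by
    rintro x (hx | hx | hx)
    · exact ⟨fun h => G.irrefl (h ▸ hCv x hx), fun h => G.irrefl (h ▸ hCw x hx)⟩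
    · exact ⟨fun h => hwadj (h ▸ (hPw x hx).1), fun h => G.irrefl (h ▸ (hPw x hx).1)⟩
    · exact ⟨fun h => G.irrefl (h ▸ (hQv x hx).1), fun h => hadj (h ▸ (hQv x hx).1)⟩
  set F : (Fin 2 ⊕ (Fin r ⊕ Fin p ⊕ Fin q)) → V :=
    Sum.elim (fun i => if i = 0 then w else v) (Sum.elim fC (Sum.elim fP fQ)) with hF
  apply hfree
  refine ⟨F, ?_, ?_⟩
  · intro a b hab
    rcases a with i | (c | (pp | qq)) <;> rcases b with j | (c' | (pp' | qq')) <;>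
        simp only [hF, Sum.elim_inl, Sum.elim_inr] at hab
    · fin_cases i <;> fin_cases j <;> simp_all
    · exfalso
      have h1 := hnev _ (Or.inl (hfC c'))
      fin_cases i <;> simp at hab <;> [exact h1.2 hab.symm; exact h1.1 hab.symm]
    · exfalso
      have h1 := hnev _ (Or.inr (Or.inl (hfP pp')))
      fin_cases i <;> simp at hab <;> [exact h1.2 hab.symm; exact h1.1 hab.symm]
    · exfalso
      have h1 := hnev _ (Or.inr (Or.inr (hfQ qq')))
      fin_cases i <;> simp at hab <;> [exact h1.2 hab.symm; exact h1.1 hab.symm]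
    · exfalso
      have h1 := hnev _ (Or.inl (hfC c))
      fin_cases j <;> simp at hab <;> [exact h1.2 hab; exact h1.1 hab]
    · rw [hfCinj hab]
    · exact absurd (hab ▸ hfC c) (hPw _ (hfP pp')).2
    · exact absurd (hab ▸ hfC c) (hQv _ (hfQ qq')).2.1
    · exfalso
      have h1 := hnev _ (Or.inr (Or.inl (hfP pp)))
      fin_cases j <;> simp at hab <;> [exact h1.2 hab; exact h1.1 hab]
    · exact absurd (hab ▸ hfP pp) (fun h => (hPw _ h).2 (hfC c'))
    · rw [hfPinj hab]
    · exact absurd (hab ▸ hfP pp) (hQv _ (hfQ qq')).2.2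
    · exfalso
      have h1 := hnev _ (Or.inr (Or.inr (hfQ qq)))
      fin_cases j <;> simp at hab <;> [exact h1.2 hab; exact h1.1 hab]
    · exact absurd (hab ▸ hfQ qq) (fun h => (hQv _ h).2.1 (hfC c'))
    · exact absurd (hab ▸ hfQ qq) (fun h => (hQv _ h).2.2 (hfP pp'))
    · rw [hfQinj hab]
  · intro a b hab
    rw [K2rpq, SimpleGraph.fromRel_adj] at hab
    obtain ⟨hne, hrel⟩ := hab
    rcases a with i | (c | (pp | qq)) <;> rcases b with j | (c' | (pp' | qq')) <;>
        simp only [K2rpqRel, or_false, false_or, or_self, or_true, true_or] at hrel <;>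
        simp only [hF, Sum.elim_inl, Sum.elim_inr]
    · fin_cases i <;> simp <;> [exact hCw _ (hfC c'); exact hCv _ (hfC c')]
    · subst hrel; simp only [if_pos rfl]; exact (hPw _ (hfP pp')).1
    · subst hrel
      rw [if_neg (by decide)]
      exact (hQv _ (hfQ qq')).1
    · fin_cases j <;> simp <;> [exact (hCw _ (hfC c)).symm; exact (hCv _ (hfC c)).symm]
    · subst hrel; simp only [if_pos rfl]; exact ((hPw _ (hfP pp)).1).symm
    · subst hrel
      rw [if_neg (by decide)]
      exact ((hQv _ (hfQ qq)).1).symm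
end

section
/- Let t ≥ 2 and let p, q, r ≥ 0 be integers with p+q+r ≥ 2. Let G be a K_{2,r}^{p,q}-free graph and let v be a vertex of G of degree d. Then the number of pairs (w, S), where w is a vertex of G different from v and S is a t-element set of common neighbors of v and w, is at most binom(d, t)·(p+q+r−2). -/
open SimpleGraph Finset

/-!
Two distinct vertices of a `K_{2,r}^{p,q}`-free graph have fewer than `p + q + r` common
neighbours: otherwise the two of them together with `p + q + r` common neighbours span a copy of
`K_{2,p+q+r}`, which contains `K_{2,r}^{p,q}`. Group the pairs `(w, S)` by the `t`-set `S ⊆ N(v)`.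
For a fixed `S`, every such `w`, and `v` itself, is a common neighbour of two distinct vertices
of `S`, so each of the `binom(d, t)` groups has at most `p + q + r - 2` members.
-/

section K2rpqFree

variable {V : Type*} {G : SimpleGraph V} {p q r : ℕ}

theorem containsCopy_K2rpq_of_le_card {u w : V} (huw : u ≠ w) (s : Finset V)
    (hs : ∀ x ∈ s, G.Adj u x ∧ G.Adj w x) (hcard : p + q + r ≤ #s) :
    ContainsCopy (K2rpq p q r) G := by
  have hle : Fintype.card (Fin r ⊕ Fin p ⊕ Fin q) ≤ Fintype.card s := by
    simp only [Fintype.card_sum, Fintype.card_fin, Fintype.card_coe]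
    omega
  obtain ⟨g⟩ := Function.Embedding.nonempty_of_card_le hle
  let c : Fin 2 → V := ![u, w]
  have hc : ∀ i x, G.Adj (c i) (g x) := by
    intro i x
    fin_cases i
    exacts [(hs _ (g x).2).1, (hs _ (g x).2).2]
  let f : Fin 2 ⊕ (Fin r ⊕ Fin p ⊕ Fin q) → V := Sum.elim c fun x => g x
  have hrel : ∀ a b, K2rpqRel p q r a b → G.Adj (f a) (f b) := by
    rintro (i | x) (j | (y | y | y)) h
    all_goals first | exact hc i _ | exact h.elim
  refine ⟨f, ?_, ?_⟩
  · refine Function.Injective.sumElim ?_ (Subtype.val_injective.comp g.injective)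
      fun i x h => (hc i x).ne h
    intro i j hij
    fin_cases i <;> fin_cases j <;> simp_all [c, huw.symm]
  · rintro a b hab
    rcases (fromRel_adj _ a b).mp hab |>.2 with h | h
    exacts [hrel a b h, (hrel b a h).symm]

variable [Fintype V] [DecidableRel G.Adj] [DecidableEq V]

theorem IsFFree.card_inter_neighborFinset_lt (hfree : IsFFree (K2rpq p q r) G) {u w : V}
    (huw : u ≠ w) : #(G.neighborFinset u ∩ G.neighborFinset w) < p + q + r := by
  by_contra! h
  refine hfree (containsCopy_K2rpq_of_le_card huw _ (fun x hx => ?_) h)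
  simpa only [mem_inter, mem_neighborFinset] using hx

theorem IsFFree.card_filter_subset_neighborFinset_lt (hfree : IsFFree (K2rpq p q r) G)
    {S : Finset V} (hS : 1 < #S) : #{w | S ⊆ G.neighborFinset w} < p + q + r := by
  obtain ⟨u, hu, w, hw, huw⟩ := one_lt_card.mp hS
  refine lt_of_le_of_lt (card_le_card fun x hx => ?_) (hfree.card_inter_neighborFinset_lt huw)
  have hxS := (mem_filter.mp hx).2
  simp only [mem_inter, mem_neighborFinset]
  exact ⟨(G.mem_neighborFinset x u).mp (hxS hu) |>.symm,
    (G.mem_neighborFinset x w).mp (hxS hw) |>.symm⟩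

end K2rpqFree

theorem stmt9_general {V : Type*} [Fintype V] [DecidableEq V]
    (G : SimpleGraph V) [DecidableRel G.Adj]
    (t p q r : ℕ) (ht : 2 ≤ t)
    (hfree : IsFFree (K2rpq p q r) G)
    (v : V) (d : ℕ) (hd : G.degree v = d) :
    (Finset.univ.filter fun wS : V × Finset V =>
        wS.1 ≠ v ∧ wS.2.card = t ∧
          wS.2 ⊆ G.neighborFinset v ∩ G.neighborFinset wS.1).card ≤
      Nat.choose d t * (p + q + r - 2) := by
  rw [← hd, ← card_neighborFinset_eq_degree, ← card_powersetCard, mul_comm]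
  refine card_le_mul_card_image_of_maps_to (f := Prod.snd) ?_ _ fun S hS => ?_
  · intro wS hwS
    obtain ⟨-, hcard, hsub⟩ := (mem_filter.mp hwS).2
    exact mem_powersetCard.mpr ⟨hsub.trans inter_subset_left, hcard⟩
  obtain ⟨hSv, hSt⟩ := mem_powersetCard.mp hS
  set W : Finset V := {w | S ⊆ G.neighborFinset w}
  have hvW : v ∈ W := mem_filter.mpr ⟨mem_univ v, hSv⟩
  have hW : #W < p + q + r := hfree.card_filter_subset_neighborFinset_lt (by omega)
  calc _ ≤ #(W.erase v) := by
        refine card_le_card_of_injOn Prod.fst (fun wS hwS => ?_) fun a ha b hb hab => ?_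
        · simp only [W, mem_coe, mem_erase, mem_filter, mem_univ, true_and] at hwS ⊢
          obtain ⟨⟨hwv, -, hsub⟩, rfl⟩ := hwS
          exact ⟨hwv, hsub.trans inter_subset_right⟩
        · exact Prod.ext hab ((mem_filter.mp ha).2.trans (mem_filter.mp hb).2.symm)
    _ = #W - 1 := card_erase_of_mem hvW
    _ ≤ p + q + r - 2 := by omega

theorem stmt9 {V : Type*} [Fintype V] [DecidableEq V]
    (G : SimpleGraph V) [DecidableRel G.Adj]
    (t p q r : ℕ) (ht : 2 ≤ t) (hpqr : 2 ≤ p + q + r)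
    (hfree : IsFFree (K2rpq p q r) G)
    (v : V) (d : ℕ) (hd : G.degree v = d) :
    (Finset.univ.filter fun wS : V × Finset V =>
        wS.1 ≠ v ∧ wS.2.card = t ∧
          wS.2 ⊆ G.neighborFinset v ∩ G.neighborFinset wS.1).card ≤
      Nat.choose d t * (p + q + r - 2) :=
  stmt9_general G t p q r ht hfree v d hd
end

section
/- Let p, q ≥ 0 and r ≥ 1 be integers. Let G be a K_{2,r}^{p,q}-free graph and let u and v be two distinct vertices of G with deg(u) ≥ p+q+r+1 and deg(v) ≥ p+q+r+1. Then u and v have at most r−1 common neighbors. -/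
open SimpleGraph Finset

theorem stmt11 {V : Type*} [Fintype V] [DecidableEq V]
    (G : SimpleGraph V) [DecidableRel G.Adj]
    (p q r : ℕ) (hr : 1 ≤ r)
    (hfree : IsFFree (K2rpq p q r) G)
    (u v : V) (huv : u ≠ v)
    (hu : p + q + r + 1 ≤ G.degree u) (hv : p + q + r + 1 ≤ G.degree v) :
    (G.neighborFinset u ∩ G.neighborFinset v).card ≤ r - 1 := by
  by_contra hcon
  push_neg at hcon
  have hRle : r ≤ (G.neighborFinset u ∩ G.neighborFinset v).card := by omega
  obtain ⟨R, hRsub, hRcard⟩ := Finset.exists_subset_card_eq hRle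
  have hdegu : G.degree u = (G.neighborFinset u).card := rfl
  have hdegv : G.degree v = (G.neighborFinset v).card := rfl
  have hPle : p ≤ ((G.neighborFinset u) \ (insert v R)).card := by
    have h1 := Finset.card_le_card_sdiff_add_card (s := G.neighborFinset u) (t := insert v R)
    have h2 : (insert v R).card ≤ r + 1 := by
      have := Finset.card_insert_le v R
      omega
    omega
  obtain ⟨P, hPsub, hPcard⟩ := Finset.exists_subset_card_eq hPle
  have hQle : q ≤ ((G.neighborFinset v) \ (insert u (R ∪ P))).card := by
    have h1 := Finset.card_le_card_sdiff_add_card (s := G.neighborFinset v)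
      (t := insert u (R ∪ P))
    have h2 : (insert u (R ∪ P)).card ≤ r + p + 1 := by
      have h3 := Finset.card_insert_le u (R ∪ P)
      have h4 := Finset.card_union_le R P
      omega
    omega
  obtain ⟨Q, hQsub, hQcard⟩ := Finset.exists_subset_card_eq hQle
  set fR : Fin r → V := fun i => ((Finset.equivFinOfCardEq hRcard).symm i : V) with hfR
  set fP : Fin p → V := fun i => ((Finset.equivFinOfCardEq hPcard).symm i : V) with hfP
  set fQ : Fin q → V := fun i => ((Finset.equivFinOfCardEq hQcard).symm i : V) with hfQ
  have hRmem : ∀ i, fR i ∈ R := fun i => Finset.coe_mem _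
  have hPmem : ∀ i, fP i ∈ P := fun i => Finset.coe_mem _
  have hQmem : ∀ i, fQ i ∈ Q := fun i => Finset.coe_mem _
  have hRinj : Function.Injective fR := fun i j h => by
    have := (Finset.equivFinOfCardEq hRcard).symm.injective (Subtype.ext h); exact this
  have hPinj : Function.Injective fP := fun i j h => by
    have := (Finset.equivFinOfCardEq hPcard).symm.injective (Subtype.ext h); exact this
  have hQinj : Function.Injective fQ := fun i j h => by
    have := (Finset.equivFinOfCardEq hQcard).symm.injective (Subtype.ext h); exact this
  -- adjacency facts
  have hRadj : ∀ x ∈ R, G.Adj u x ∧ G.Adj v x := by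
    intro x hx
    have := hRsub hx
    simp only [Finset.mem_inter, SimpleGraph.mem_neighborFinset] at this
    exact this
  have hPadj : ∀ x ∈ P, G.Adj u x ∧ x ≠ v ∧ x ∉ R := by
    intro x hx
    have := hPsub hx
    simp only [Finset.mem_sdiff, SimpleGraph.mem_neighborFinset, Finset.mem_insert,
      not_or] at this
    exact ⟨this.1, this.2.1, this.2.2⟩
  have hQadj : ∀ x ∈ Q, G.Adj v x ∧ x ≠ u ∧ x ∉ R ∧ x ∉ P := by
    intro x hx
    have := hQsub hx
    simp only [Finset.mem_sdiff, SimpleGraph.mem_neighborFinset, Finset.mem_insert,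
      Finset.mem_union, not_or] at this
    exact ⟨this.1, this.2.1, this.2.2.1, this.2.2.2⟩
  have huR : u ∉ R := fun h => G.irrefl (hRadj u h).1
  have hvR : v ∉ R := fun h => G.irrefl (hRadj v h).2
  have huP : u ∉ P := fun h => G.irrefl (hPadj u h).1
  have hvP : v ∉ P := fun h => (hPadj v h).2.1 rfl
  have huQ : u ∉ Q := fun h => (hQadj u h).2.1 rfl
  have hvQ : v ∉ Q := fun h => G.irrefl (hQadj v h).1
  set f : (Fin 2 ⊕ (Fin r ⊕ Fin p ⊕ Fin q)) → V := fun x =>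
    match x with
    | Sum.inl i => if i = 0 then u else v
    | Sum.inr (Sum.inl i) => fR i
    | Sum.inr (Sum.inr (Sum.inl i)) => fP i
    | Sum.inr (Sum.inr (Sum.inr i)) => fQ i
    with hf
  have hfL : ∀ i : Fin 2, f (Sum.inl i) = u ∨ f (Sum.inl i) = v := by
    intro i
    by_cases h : i = 0 <;> simp [hf, h]
  apply hfree
  refine ⟨f, ?_, ?_⟩
  · -- injectivity
    rintro (i | (i | i | i)) (j | (j | j | j)) h <;>
      simp only [hf] at h
    · fin_cases i <;> fin_cases j <;> simp only [reduceIte, Fin.isValue, Fin.mk_one,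
        one_ne_zero, if_neg, if_pos] at h ⊢ <;>
        first | rfl | exact absurd h huv | exact absurd h.symm huv
    · rcases hfL i with h' | h' <;> simp only [hf] at h' <;> rw [h'] at h <;>
        [exact absurd (h ▸ hRmem j) huR; exact absurd (h ▸ hRmem j) hvR]
    · rcases hfL i with h' | h' <;> simp only [hf] at h' <;> rw [h'] at h <;>
        [exact absurd (h ▸ hPmem j) huP; exact absurd (h ▸ hPmem j) hvP]
    · rcases hfL i with h' | h' <;> simp only [hf] at h' <;> rw [h'] at h <;>
        [exact absurd (h ▸ hQmem j) huQ; exact absurd (h ▸ hQmem j) hvQ]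
    · rcases hfL j with h' | h' <;> simp only [hf] at h' <;> rw [h'] at h <;>
        [exact absurd (h ▸ hRmem i) huR; exact absurd (h ▸ hRmem i) hvR]
    · exact congrArg (Sum.inr ∘ Sum.inl) (hRinj h)
    · exact absurd (h ▸ hRmem i) (hPadj _ (hPmem j)).2.2
    · exact absurd (h ▸ hRmem i) (hQadj _ (hQmem j)).2.2.1
    · rcases hfL j with h' | h' <;> simp only [hf] at h' <;> rw [h'] at h <;>
        [exact absurd (h ▸ hPmem i) huP; exact absurd (h ▸ hPmem i) hvP]
    · exfalso; apply (hPadj _ (hPmem i)).2.2; rw [h]; exact hRmem j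
    · exact congrArg (Sum.inr ∘ Sum.inr ∘ Sum.inl) (hPinj h)
    · exact absurd (h ▸ hPmem i) (hQadj _ (hQmem j)).2.2.2
    · rcases hfL j with h' | h' <;> simp only [hf] at h' <;> rw [h'] at h <;>
        [exact absurd (h ▸ hQmem i) huQ; exact absurd (h ▸ hQmem i) hvQ]
    · exfalso; apply (hQadj _ (hQmem i)).2.2.1; rw [h]; exact hRmem j
    · exfalso; apply (hQadj _ (hQmem i)).2.2.2; rw [h]; exact hPmem j
    · exact congrArg (Sum.inr ∘ Sum.inr ∘ Sum.inr) (hQinj h)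
  · -- adjacency
    rintro (i | (i | i | i)) (j | (j | j | j)) hab <;>
      simp only [K2rpq, SimpleGraph.fromRel_adj, K2rpqRel] at hab
    · simp at hab
    · -- inl i — inr inl j : K_{2,r} edges
      rcases hfL i with h' | h' <;> rw [h']
      · exact (hRadj _ (hRmem j)).1
      · exact (hRadj _ (hRmem j)).2
    · -- inl i — pendant at u : i = 0
      have hi : i = 0 := by tauto
      simp only [hf, hi, if_pos rfl]
      exact (hPadj _ (hPmem j)).1
    · have hi : i = 1 := by tauto
      simp only [hf, hi]
      norm_num
      exact (hQadj _ (hQmem j)).1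
    · rcases hfL j with h' | h' <;> rw [h']
      · exact ((hRadj _ (hRmem i)).1).symm
      · exact ((hRadj _ (hRmem i)).2).symm
    · simp at hab
    · simp at hab
    · simp at hab
    · have hj : j = 0 := by tauto
      simp only [hf, hj, if_pos rfl]
      exact ((hPadj _ (hPmem i)).1).symm
    · simp at hab
    · simp at hab
    · simp at hab
    · have hj : j = 1 := by tauto
      simp only [hf, hj]
      norm_num
      exact ((hQadj _ (hQmem i)).1).symm
    · simp at hab
    · simp at hab
    · simp at hab
end

section
/- Let t ≥ 2 and let p, q, r ≥ 0 be integers with r > t. Then every K_{2,r}^{p,q}-free graph G on n vertices satisfies 𝒩(K_{2,t}, G) ≤ binom(n,2)·binom(r−1,t) + n·(p+q+r)·binom(p+q+r,t). -/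
open SimpleGraph Finset

/-!
A copy of `K_{2,t}` is determined by its parts `(A, B)`, where `|A| = 2`, `|B| = t` and `B` lies in
the common neighbourhood `N(A)`. Pairs with `|N(A)| < r` number at most `C(n,2) C(r-1,t)`.
If `|N(A)| ≥ r`, then some `u ∈ A` has degree at most `d = p + q + r`: otherwise `r` common,
`q` private and `p` private neighbours, chosen greedily, span `K_{2,r}^{p,q}`. The same fact
bounds the common neighbourhood of any two vertices by `d`. Hence such a pair `(A, B)` is
recovered from `u` (`n` choices), `B ⊆ N(u)` (`C(d,t)` choices) and the other vertex of `A`,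
a common neighbour of `B` (`d` choices).
-/

theorem Finset.card_sigma_powersetCard_le {ι α : Type*} (X : Finset ι) (S : ι → Finset α)
    {b m : ℕ} (h : ∀ x ∈ X, #(S x) ≤ m) :
    #(X.sigma fun x ↦ (S x).powersetCard b) ≤ #X * m.choose b := by
  rw [card_sigma, ← smul_eq_mul]
  refine sum_le_card_nsmul _ _ _ fun x hx ↦ ?_
  rw [card_powersetCard]
  exact Nat.choose_le_choose b (h x hx)

theorem containsCopy_K2rpq {V : Type*} {G : SimpleGraph V} {p q r : ℕ} {u v : V} (huv : u ≠ v)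
    {W P Q : Finset V} (hW : #W = r) (hP : #P = p) (hQ : #Q = q)
    (hWP : Disjoint W P) (hWQ : Disjoint W Q) (hPQ : Disjoint P Q) (hvP : v ∉ P) (huQ : u ∉ Q)
    (hWadj : ∀ x ∈ W, G.Adj u x ∧ G.Adj v x) (hPadj : ∀ x ∈ P, G.Adj u x)
    (hQadj : ∀ x ∈ Q, G.Adj v x) :
    ContainsCopy (K2rpq p q r) G := by
  let w : Fin r → V := fun i ↦ (W.equivFinOfCardEq hW).symm i
  let x : Fin p → V := fun i ↦ (P.equivFinOfCardEq hP).symm i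
  let y : Fin q → V := fun i ↦ (Q.equivFinOfCardEq hQ).symm i
  have hw i : w i ∈ W := Subtype.prop _
  have hx i : x i ∈ P := Subtype.prop _
  have hy i : y i ∈ Q := Subtype.prop _
  have hw_inj : w.Injective := Subtype.val_injective.comp (Equiv.injective _)
  have hx_inj : x.Injective := Subtype.val_injective.comp (Equiv.injective _)
  have hy_inj : y.Injective := Subtype.val_injective.comp (Equiv.injective _)
  let g := Sum.elim w (Sum.elim x y)
  have hg_inj : g.Injective := by
    refine hw_inj.sumElim (hx_inj.sumElim hy_inj ?_) ?_
    · exact fun i j ↦ ne_of_mem_of_not_mem (hx i) (disjoint_right.mp hPQ (hy j))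
    · rintro i (j | j)
      exacts [ne_of_mem_of_not_mem (hw i) (disjoint_right.mp hWP (hx j)),
        ne_of_mem_of_not_mem (hw i) (disjoint_right.mp hWQ (hy j))]
  have hgu : ∀ z, g z ≠ u := by
    rintro (i | i | i)
    exacts [((hWadj _ (hw i)).1.ne).symm, ((hPadj _ (hx i)).ne).symm,
      ne_of_mem_of_not_mem (hy i) huQ]
  have hgv : ∀ z, g z ≠ v := by
    rintro (i | i | i)
    exacts [((hWadj _ (hw i)).2.ne).symm, ne_of_mem_of_not_mem (hx i) hvP,
      ((hQadj _ (hy i)).ne).symm]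
  let f := Sum.elim ![u, v] g
  refine ⟨f, ?_, ?_⟩
  · refine Function.Injective.sumElim ?_ hg_inj ?_
    · simp [Function.Injective, Fin.forall_fin_two, huv, huv.symm]
    · simp [Fin.forall_fin_two, fun z ↦ (hgu z).symm, fun z ↦ (hgv z).symm]
  · suffices h : ∀ a b, K2rpqRel p q r a b → G.Adj (f a) (f b) by
      rintro a b ⟨-, hab | hab⟩
      exacts [h a b hab, (h b a hab).symm]
    rintro (i | a) (i' | j | j | j) hab <;> simp only [K2rpqRel] at hab
    · fin_cases i
      exacts [(hWadj _ (hw j)).1, (hWadj _ (hw j)).2]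
    · subst hab; exact hPadj _ (hx j)
    · subst hab; exact hQadj _ (hy j)

namespace SimpleGraph

variable {V : Type*} {G : SimpleGraph V}

section CommonNeighbors

variable [Fintype V] [DecidableRel G.Adj]

variable (G) in
def commonNeighborsOf (s : Finset V) : Finset V := {x | ∀ a ∈ s, G.Adj a x}

@[simp]
theorem mem_commonNeighborsOf {s : Finset V} {x : V} :
    x ∈ G.commonNeighborsOf s ↔ ∀ a ∈ s, G.Adj a x := by
  simp [commonNeighborsOf]

theorem commonNeighborsOf_subset_neighborFinset {s : Finset V} {a : V} (ha : a ∈ s) :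
    G.commonNeighborsOf s ⊆ G.neighborFinset a :=
  fun _ hx ↦ (mem_neighborFinset ..).mpr (mem_commonNeighborsOf.mp hx a ha)

theorem commonNeighborsOf_anti {s s' : Finset V} (h : s ⊆ s') :
    G.commonNeighborsOf s' ⊆ G.commonNeighborsOf s :=
  fun _ hx ↦ mem_commonNeighborsOf.mpr fun a ha ↦ mem_commonNeighborsOf.mp hx a (h ha)

variable [DecidableEq V] {p q r : ℕ}

theorem exists_mem_degree_le_of_isFFree_K2rpq (hfree : IsFFree (K2rpq p q r) G) {A : Finset V}
    (hA : #A = 2) (h : r ≤ #(G.commonNeighborsOf A)) : ∃ u ∈ A, G.degree u ≤ p + q + r := by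
  obtain ⟨u, v, huv, rfl⟩ := card_eq_two.mp hA
  by_contra! hdeg
  have hdeg_u := hdeg u (by simp)
  have hdeg_v := hdeg v (by simp)
  obtain ⟨W, hW_sub, hW⟩ := exists_subset_card_eq h
  have hQ_room : q ≤ #(G.neighborFinset v \ insert u W) := by
    have h_sdiff := le_card_sdiff (insert u W) (G.neighborFinset v)
    rw [card_neighborFinset_eq_degree] at h_sdiff
    have := card_insert_le u W
    omega
  obtain ⟨Q, hQ_sub, hQ⟩ := exists_subset_card_eq hQ_room
  have hP_room : p ≤ #(G.neighborFinset u \ insert v (W ∪ Q)) := by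
    have h_sdiff := le_card_sdiff (insert v (W ∪ Q)) (G.neighborFinset u)
    rw [card_neighborFinset_eq_degree] at h_sdiff
    have := card_insert_le v (W ∪ Q)
    have := card_union_le W Q
    omega
  obtain ⟨P, hP_sub, hP⟩ := exists_subset_card_eq hP_room
  obtain ⟨hQ_nbr, huQ, hQW⟩ : Q ⊆ G.neighborFinset v ∧ u ∉ Q ∧ Disjoint Q W := by
    rwa [subset_sdiff, disjoint_insert_right] at hQ_sub
  obtain ⟨hP_nbr, hvP, hPW, hPQ⟩ :
      P ⊆ G.neighborFinset u ∧ v ∉ P ∧ Disjoint P W ∧ Disjoint P Q := by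
    rwa [subset_sdiff, disjoint_insert_right, disjoint_union_right] at hP_sub
  refine hfree (containsCopy_K2rpq huv hW hP hQ hPW.symm hQW.symm hPQ hvP huQ ?_
    (fun x hx ↦ (mem_neighborFinset ..).mp (hP_nbr hx))
    (fun x hx ↦ (mem_neighborFinset ..).mp (hQ_nbr hx)))
  intro x hx
  have := mem_commonNeighborsOf.mp (hW_sub hx)
  exact ⟨this u (by simp), this v (by simp)⟩

theorem card_commonNeighborsOf_le_of_isFFree_K2rpq (hfree : IsFFree (K2rpq p q r) G)
    {s : Finset V} (hs : 2 ≤ #s) : #(G.commonNeighborsOf s) ≤ p + q + r := by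
  obtain ⟨u, hu, v, hv, huv⟩ := one_lt_card.mp hs
  have hsub : G.commonNeighborsOf s ⊆ G.commonNeighborsOf {u, v} :=
    commonNeighborsOf_anti (insert_subset hu (singleton_subset_iff.mpr hv))
  refine (card_le_card hsub).trans ?_
  by_cases hr : r ≤ #(G.commonNeighborsOf {u, v})
  · obtain ⟨a, ha, hdeg⟩ := exists_mem_degree_le_of_isFFree_K2rpq hfree (card_pair huv) hr
    calc #(G.commonNeighborsOf {u, v}) ≤ #(G.neighborFinset a) :=
          card_le_card (commonNeighborsOf_subset_neighborFinset ha)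
      _ = G.degree a := card_neighborFinset_eq_degree G a
      _ ≤ _ := hdeg
  · omega

end CommonNeighbors

theorem Subgraph.toSubgraph_copy_of_iso {γ : Type*} {H : SimpleGraph γ} (G' : G.Subgraph)
    (e : G'.coe ≃g H) :
    Copy.toSubgraph ⟨G'.hom.comp e.symm.toHom, hom_injective.comp e.symm.injective⟩ = G' := by
  simp [Copy.toSubgraph, Subgraph.map_comp]

section Bicliques

variable [DecidableEq V] {α β : Type*} [Fintype α] [Fintype β]

namespace Copy

def parts (f : Copy (_root_.completeBipartiteGraph α β) G) : Finset V × Finset V :=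
  (univ.image (f ∘ Sum.inl), univ.image (f ∘ Sum.inr))

theorem toSubgraph_verts (f : Copy (_root_.completeBipartiteGraph α β) G) :
    f.toSubgraph.verts = ↑(f.parts.1 ∪ f.parts.2) := by
  ext x
  simp [parts]

theorem toSubgraph_adj_iff (f : Copy (_root_.completeBipartiteGraph α β) G) {x y : V} :
    f.toSubgraph.Adj x y ↔
      x ∈ f.parts.1 ∧ y ∈ f.parts.2 ∨ x ∈ f.parts.2 ∧ y ∈ f.parts.1 := by
  simp [parts, Relation.Map]

theorem toSubgraph_eq_of_parts_eq {f g : Copy (_root_.completeBipartiteGraph α β) G}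
    (h : f.parts = g.parts) : f.toSubgraph = g.toSubgraph := by
  ext x y
  · rw [toSubgraph_verts, toSubgraph_verts, h]
  · rw [toSubgraph_adj_iff, toSubgraph_adj_iff, h]

end Copy

variable [Fintype V] [DecidableRel G.Adj]

variable (G) in
def bicliques (a b : ℕ) : Finset (Finset V × Finset V) :=
  {AB | #AB.1 = a ∧ #AB.2 = b ∧ ∀ x ∈ AB.1, ∀ y ∈ AB.2, G.Adj x y}

@[simp]
theorem mem_bicliques {a b : ℕ} {AB : Finset V × Finset V} :
    AB ∈ G.bicliques a b ↔
      #AB.1 = a ∧ #AB.2 = b ∧ ∀ x ∈ AB.1, ∀ y ∈ AB.2, G.Adj x y := by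
  simp [bicliques]

theorem Copy.parts_mem_bicliques (f : Copy (_root_.completeBipartiteGraph α β) G) :
    f.parts ∈ G.bicliques (Fintype.card α) (Fintype.card β) := by
  refine mem_bicliques.mpr ⟨?_, ?_, ?_⟩
  · exact (card_image_of_injective _ (f.injective.comp Sum.inl_injective)).trans card_univ
  · exact (card_image_of_injective _ (f.injective.comp Sum.inr_injective)).trans card_univ
  · simp only [parts, mem_image, mem_univ, true_and, Function.comp_apply]
    rintro _ ⟨a, rfl⟩ _ ⟨b, rfl⟩
    exact f.toHom.map_adj (by simp)

theorem copyCount_completeBipartiteGraph_le :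
    _root_.copyCount (completeBipartiteGraph α β) G ≤
      #(G.bicliques (Fintype.card α) (Fintype.card β)) := by
  let copyOf (G' : {G' : G.Subgraph // Nonempty (G'.coe ≃g completeBipartiteGraph α β)}) :
      Copy (completeBipartiteGraph α β) G :=
    ⟨G'.1.hom.comp (Classical.choice G'.2).symm.toHom,
      Subgraph.hom_injective.comp (Classical.choice G'.2).symm.injective⟩
  have hcopyOf G' : (copyOf G').toSubgraph = G'.1 :=
    Subgraph.toSubgraph_copy_of_iso G'.1 (Classical.choice G'.2)
  calc _ ≤ Nat.card (G.bicliques (Fintype.card α) (Fintype.card β)) :=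
        Nat.card_le_card_of_injective
          (fun G' ↦ ⟨(copyOf G').parts, Copy.parts_mem_bicliques _⟩)
          fun G₁ G₂ h ↦ Subtype.ext <| by
            rw [← hcopyOf G₁, ← hcopyOf G₂]
            exact Copy.toSubgraph_eq_of_parts_eq (congrArg Subtype.val h)
    _ = _ := Nat.card_eq_finsetCard _

theorem card_bicliques_filter_le_of_card_commonNeighborsOf_le (a b m : ℕ) :
    #{AB ∈ G.bicliques a b | #(G.commonNeighborsOf AB.1) ≤ m} ≤
      (Fintype.card V).choose a * m.choose b := by
  let X : Finset (Finset V) := {A ∈ univ.powersetCard a | #(G.commonNeighborsOf A) ≤ m}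
  calc _ ≤ #(X.sigma fun A ↦ (G.commonNeighborsOf A).powersetCard b) := by
        refine card_le_card_of_injOn (fun AB ↦ ⟨AB.1, AB.2⟩) (fun AB hAB ↦ ?_) ?_
        · simp only [mem_coe, mem_filter, mem_bicliques] at hAB
          simp only [mem_coe, mem_sigma, mem_filter, mem_powersetCard, X, subset_univ, true_and]
          obtain ⟨⟨hA, hB, hAB⟩, hN⟩ := hAB
          exact ⟨⟨hA, hN⟩, fun y hy ↦ mem_commonNeighborsOf.mpr fun x hx ↦ hAB x hx y hy,
            hB⟩
        · intro AB _ AB' _ h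
          simpa [Prod.ext_iff] using h
    _ ≤ #X * m.choose b := card_sigma_powersetCard_le _ _ fun A hA ↦ (mem_filter.mp hA).2
    _ ≤ _ := Nat.mul_le_mul_right _ ((card_filter_le _ _).trans (by simp))

variable {p q r : ℕ}

theorem card_bicliques_filter_le_of_le_card_commonNeighborsOf (hfree : IsFFree (K2rpq p q r) G)
    {b : ℕ} (hb : 2 ≤ b) :
    #{AB ∈ G.bicliques 2 b | r ≤ #(G.commonNeighborsOf AB.1)} ≤
      Fintype.card V * (p + q + r) * (p + q + r).choose b := by
  set d := p + q + r
  set S := {AB ∈ G.bicliques 2 b | r ≤ #(G.commonNeighborsOf AB.1)}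
  set T := ({u | G.degree u ≤ d} : Finset V).sigma fun u ↦ (G.neighborFinset u).powersetCard b
  have hT : #T ≤ Fintype.card V * d.choose b :=
    (card_sigma_powersetCard_le _ _ fun u hu ↦ by simpa using hu).trans
      (Nat.mul_le_mul_right _ (card_filter_le _ _))
  -- Double counting of `(A, B) ∈ S`, `(u, B) ∈ T` with `u ∈ A`: every `(A, B)` has a partner, and
  -- `(u, B)` has at most `#N(B) ≤ d` partners, since the other vertex of `A` lies in `N(B)`.
  have hST : #S * 1 ≤ #T * d := by
    refine card_mul_le_card_mul (fun AB (uB : Σ _ : V, Finset V) ↦ uB.1 ∈ AB.1 ∧ uB.2 = AB.2)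
      (fun AB hAB ↦ ?_) (fun uB huB ↦ ?_)
    · obtain ⟨hAB_S, hr⟩ := mem_filter.mp hAB
      obtain ⟨hA, hB, hAB_adj⟩ := mem_bicliques.mp hAB_S
      obtain ⟨u, hu, hdeg⟩ := exists_mem_degree_le_of_isFFree_K2rpq hfree hA hr
      refine one_le_card.mpr ⟨⟨u, AB.2⟩, (mem_bipartiteAbove _).mpr ⟨?_, hu, rfl⟩⟩
      simp only [T, mem_sigma, mem_filter, mem_univ, true_and, mem_powersetCard]
      exact ⟨hdeg, fun y hy ↦ (mem_neighborFinset ..).mpr (hAB_adj u hu y hy), hB⟩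
    · obtain ⟨u, B⟩ := uB
      have hB : #B = b := (mem_powersetCard.mp (mem_sigma.mp huB).2).2
      calc _ ≤ #(G.commonNeighborsOf B) := card_le_card_of_surjOn (fun v ↦ ({u, v}, B)) ?_
        _ ≤ d := card_commonNeighborsOf_le_of_isFFree_K2rpq hfree (hB ▸ hb)
      intro AB hAB
      obtain ⟨hAB_S, hu, rfl⟩ := (mem_bipartiteBelow _).mp (mem_coe.mp hAB)
      obtain ⟨hA, -, hAB_adj⟩ := mem_bicliques.mp (mem_filter.mp hAB_S).1
      obtain ⟨v, hv⟩ := card_eq_one.mp (by rw [card_erase_of_mem hu, hA] : #(AB.1.erase u) = 1)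
      have hA_eq : AB.1 = {u, v} := by rw [← insert_erase hu, hv]
      have hv_mem : v ∈ AB.1 := by simp [hA_eq]
      exact ⟨v, mem_commonNeighborsOf.mpr fun y hy ↦ (hAB_adj v hv_mem y hy).symm,
        Prod.ext hA_eq.symm rfl⟩
  calc #S ≤ #T * d := by simpa using hST
    _ ≤ _ := by rw [mul_right_comm]; exact Nat.mul_le_mul_right _ hT

end Bicliques

end SimpleGraph

theorem stmt12_general (t p q r n : ℕ) (ht : 2 ≤ t)
    (G : SimpleGraph (Fin n)) (hfree : IsFFree (K2rpq p q r) G) :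
    _root_.copyCount (completeBipartiteGraph (Fin 2) (Fin t)) G ≤
      Nat.choose n 2 * Nat.choose (r - 1) t +
        n * (p + q + r) * Nat.choose (p + q + r) t := by
  classical
  calc _ ≤ #(G.bicliques 2 t) := by
        simpa using copyCount_completeBipartiteGraph_le (G := G) (α := Fin 2) (β := Fin t)
    _ = #{AB ∈ G.bicliques 2 t | #(G.commonNeighborsOf AB.1) < r} +
          #{AB ∈ G.bicliques 2 t | r ≤ #(G.commonNeighborsOf AB.1)} := by
      rw [← card_filter_add_card_filter_not fun AB ↦ #(G.commonNeighborsOf AB.1) < r]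
      simp only [not_lt]
    _ ≤ #{AB ∈ G.bicliques 2 t | #(G.commonNeighborsOf AB.1) ≤ r - 1} +
          #{AB ∈ G.bicliques 2 t | r ≤ #(G.commonNeighborsOf AB.1)} := by
      gcongr with AB
      exact Nat.le_sub_one_of_lt
    _ ≤ _ := by
      gcongr
      · simpa using card_bicliques_filter_le_of_card_commonNeighborsOf_le (G := G) 2 t (r - 1)
      · simpa using card_bicliques_filter_le_of_le_card_commonNeighborsOf hfree ht

theorem stmt12 (t p q r n : ℕ) (ht : 2 ≤ t) (hr : t < r)
    (G : SimpleGraph (Fin n)) (hfree : IsFFree (K2rpq p q r) G) :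
    _root_.copyCount (completeBipartiteGraph (Fin 2) (Fin t)) G ≤
      Nat.choose n 2 * Nat.choose (r - 1) t +
        n * (p + q + r) * Nat.choose (p + q + r) t :=
  stmt12_general t p q r n ht G hfree
end

section
/- The complete bipartite graph K_{7,7} contains no subgraph isomorphic to K_{2,2}^{3,3}, and it contains exactly 42 copies of K_{2,7}; consequently ex(14, K_{2,7}, K_{2,2}^{3,3}) ≥ 42. -/
open SimpleGraph Finset

/-!
A copy of `K_{2,2}^{3,3}` in `K_{7,7}` would put its two centres on one side (they have a common
neighbour) and its eight other vertices, each adjacent to a centre, on the other side, which has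
only seven vertices.

In a triangle-free `n`-regular graph with `n ≥ 3`, each of the two hubs of a copy of `K_{2,n}`
already has `n` neighbours inside the copy, hence no others: the hubs are twins and the copy is
the subgraph induced by them together with their common neighbourhood. Conversely every pair of
twins spans such a copy, and the copy determines the pair. In `K_{n,n}` the twin pairs are the
pairs of vertices on a common side, `2 * n.choose 2 = 42` of them for `n = 7`; relabelling
`K_{7,7}` on `Fin 14` gives the lower bound for `exNum`.
-/

section HostTransfer

variable {α β V W : Type*} {F : SimpleGraph α} {H : SimpleGraph β} {G : SimpleGraph V}
  {G₂ : SimpleGraph W}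

lemma containsCopy_iff_isContained : ContainsCopy F G ↔ F ⊑ G :=
  ⟨fun ⟨f, hf, hadj⟩ => ⟨⟨⟨f, fun h => hadj h⟩, hf⟩⟩,
    fun ⟨c⟩ => ⟨c, c.injective, fun _ _ h => c.toHom.map_adj h⟩⟩

lemma isFFree_congr_right (ψ : G ≃g G₂) : IsFFree F G ↔ IsFFree F G₂ := by
  simp only [IsFFree, containsCopy_iff_isContained, isContained_congr_right ψ]

def SimpleGraph.Iso.mapSubgraph (ψ : G ≃g G₂) : G.Subgraph ≃ G₂.Subgraph where
  toFun := Subgraph.map ψ.toHom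
  invFun := Subgraph.map ψ.symm.toHom
  left_inv A := by
    rw [← Subgraph.map_comp]
    convert A.map_id
    ext; simp
  right_inv A := by
    rw [← Subgraph.map_comp]
    convert A.map_id
    ext; simp

lemma copyCount_congr_right (ψ : G ≃g G₂) : _root_.copyCount H G = _root_.copyCount H G₂ :=
  Nat.card_congr <| ψ.mapSubgraph.subtypeEquiv fun A =>
    ⟨fun ⟨e⟩ => ⟨e.comp (ψ.toCopy.isoSubgraphMap A).symm⟩,
      fun ⟨e⟩ => ⟨e.comp (ψ.toCopy.isoSubgraphMap A)⟩⟩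

lemma copyCount_le_exNum [Fintype V] (hG : IsFFree F G) :
    _root_.copyCount H G ≤ exNum (Fintype.card V) H F := by
  let ψ := Iso.map (Fintype.equivFin V) G
  refine le_csSup ?_ ⟨_, (isFFree_congr_right ψ).1 hG, (copyCount_congr_right ψ).symm⟩
  refine (Set.finite_range fun G' : SimpleGraph (Fin (Fintype.card V)) =>
    _root_.copyCount H G').bddAbove.mono ?_
  rintro _ ⟨G', -, rfl⟩
  exact ⟨G', rfl⟩

end HostTransfer

namespace SimpleGraph

variable {V : Type*} (G : SimpleGraph V)

def twinGraph : SimpleGraph V where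
  Adj x y := x ≠ y ∧ G.neighborSet x = G.neighborSet y
  symm := ⟨fun _ _ h => ⟨h.1.symm, h.2.symm⟩⟩
  loopless := ⟨fun _ h => h.1 rfl⟩

/-- For a pair of twins of degree `d` in a triangle-free graph, this is a copy of `K_{2,d}`. -/
def pairStar (p : Sym2 V) : G.Subgraph :=
  (⊤ : G.Subgraph).induce {v | v ∈ p ∨ ∀ z ∈ p, G.Adj z v}

variable {G} {n : ℕ}

lemma mem_pairStar_verts {p : Sym2 V} {v : V} :
    v ∈ (G.pairStar p).verts ↔ v ∈ p ∨ ∀ z ∈ p, G.Adj z v :=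
  Iff.rfl

lemma neighborSet_eq_of_mem_edgeSet_twinGraph {p : Sym2 V} (hp : p ∈ G.twinGraph.edgeSet)
    {x y : V} (hx : x ∈ p) (hy : y ∈ p) : G.neighborSet x = G.neighborSet y := by
  induction p using Sym2.ind with | _ a b
  obtain ⟨-, hab⟩ := hp
  rcases Sym2.mem_iff.1 hx with rfl | rfl <;> rcases Sym2.mem_iff.1 hy with rfl | rfl <;>
    simp [hab]

lemma neighborSet_subset_pairStar_verts {p : Sym2 V} (hp : p ∈ G.twinGraph.edgeSet) {x : V}
    (hx : x ∈ p) : G.neighborSet x ⊆ (G.pairStar p).verts :=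
  fun _ hz => .inr fun _ hw => by
    rwa [← mem_neighborSet, neighborSet_eq_of_mem_edgeSet_twinGraph hp hw hx]

lemma twinGraph_le_compl : G.twinGraph ≤ Gᶜ := fun x y ⟨hxy, hN⟩ =>
  ⟨hxy, fun h => G.loopless.irrefl y (by rwa [← mem_neighborSet, ← hN])⟩

lemma not_adj_of_cliqueFree_three (hG : G.CliqueFree 3) {a b c : V} (hab : G.Adj a b)
    (hac : G.Adj a c) : ¬G.Adj b c :=
  fun hbc => isIndepSet_neighborSet_of_triangleFree G hG a hab hac hbc.ne hbc

section CopyOfCompleteBipartite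

variable {G' : G.Subgraph} (e : G'.coe ≃g completeBipartiteGraph (Fin 2) (Fin n))

lemma Subgraph.neighborSet_symm_inl (i : Fin 2) :
    G'.neighborSet (e.symm (.inl i)) = Set.range fun j => (e.symm (.inr j) : V) := by
  ext z
  constructor
  · intro h
    have hz : z ∈ G'.verts := G'.edge_vert h.symm
    have hadj : (completeBipartiteGraph (Fin 2) (Fin n)).Adj (.inl i) (e ⟨z, hz⟩) := by
      simpa using e.map_adj_iff.2 (show G'.coe.Adj (e.symm (.inl i)) ⟨z, hz⟩ from h)
    obtain ⟨j, hj⟩ : ∃ j, e ⟨z, hz⟩ = .inr j := by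
      cases h : e ⟨z, hz⟩ <;> simp_all
    refine ⟨j, show (e.symm (.inr j) : V) = z by rw [← hj]; simp⟩
  · rintro ⟨j, rfl⟩
    exact e.symm.map_adj_iff.2 (by simp)

lemma Subgraph.mem_verts_iff_of_iso {x : V} :
    x ∈ G'.verts ↔ (∃ i, x = e.symm (.inl i)) ∨ ∃ j, x = e.symm (.inr j) := by
  constructor
  · intro hx
    cases h : e ⟨x, hx⟩ with
    | inl i => exact .inl ⟨i, by rw [← h]; simp⟩
    | inr j => exact .inr ⟨j, by rw [← h]; simp⟩
  · rintro (⟨i, rfl⟩ | ⟨j, rfl⟩) <;> exact Subtype.prop _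

variable (hreg : ∀ v, (G.neighborSet v).ncard = n) (hn : 0 < n)
include hreg hn

lemma Subgraph.neighborSet_symm_inl_of_regular (i : Fin 2) :
    G.neighborSet (e.symm (.inl i)) = Set.range fun j => (e.symm (.inr j) : V) := by
  rw [← Subgraph.neighborSet_symm_inl e i]
  refine (Set.eq_of_subset_of_ncard_le (G'.neighborSet_subset _) ?_
    (Set.finite_of_ncard_pos (by rw [hreg]; exact hn))).symm
  rw [hreg, Subgraph.neighborSet_symm_inl e i, Set.ncard_range_of_injective
    (f := fun j => (e.symm (.inr j) : V))
    (Subtype.val_injective.comp (e.symm.injective.comp Sum.inr_injective))]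
  simp

lemma Subgraph.mk_mem_edgeSet_twinGraph_of_iso :
    s((e.symm (.inl 0) : V), e.symm (.inl 1)) ∈ G.twinGraph.edgeSet :=
  ⟨fun h => by simpa using e.symm.injective (Subtype.ext h), by
    rw [Subgraph.neighborSet_symm_inl_of_regular e hreg hn,
      Subgraph.neighborSet_symm_inl_of_regular e hreg hn]⟩

lemma Subgraph.eq_pairStar_of_iso (hG : G.CliqueFree 3) :
    G' = G.pairStar s(e.symm (.inl 0), e.symm (.inl 1)) := by
  have hN := Subgraph.neighborSet_symm_inl_of_regular e hreg hn
  have hverts : G'.verts = {v | v ∈ s((e.symm (.inl 0) : V), e.symm (.inl 1)) ∨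
      ∀ z ∈ s((e.symm (.inl 0) : V), e.symm (.inl 1)), G.Adj z v} := by
    ext x
    simp only [Sym2.mem_iff, forall_eq_or_imp, forall_eq]
    rw [Subgraph.mem_verts_iff_of_iso e]
    constructor
    · rintro (⟨i, rfl⟩ | ⟨j, rfl⟩)
      · fin_cases i
        exacts [.inl (.inl rfl), .inl (.inr rfl)]
      · simp only [← SimpleGraph.mem_neighborSet, hN]
        exact .inr ⟨⟨j, rfl⟩, ⟨j, rfl⟩⟩
    · rintro ((rfl | rfl) | ⟨h, -⟩)
      · exact .inl ⟨0, rfl⟩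
      · exact .inl ⟨1, rfl⟩
      · rw [← SimpleGraph.mem_neighborSet, hN] at h
        obtain ⟨j, rfl⟩ := h
        exact .inr ⟨j, rfl⟩
  refine Subgraph.ext hverts (funext₂ fun a b => propext ?_)
  rw [pairStar, Subgraph.induce_adj, ← hverts, Subgraph.top_adj]
  refine ⟨fun h => ⟨G'.edge_vert h, G'.edge_vert h.symm, G'.adj_sub h⟩, ?_⟩
  rintro ⟨ha, hb, hab⟩
  have hG'adj (i : Fin 2) (j : Fin n) : G'.Adj (e.symm (.inl i)) (e.symm (.inr j)) := by
    rw [← Subgraph.mem_neighborSet, Subgraph.neighborSet_symm_inl]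
    exact ⟨j, rfl⟩
  have hGadj (i : Fin 2) (j : Fin n) : G.Adj (e.symm (.inl i)) (e.symm (.inr j)) :=
    G'.adj_sub (hG'adj i j)
  rw [Subgraph.mem_verts_iff_of_iso e] at ha hb
  rcases ha with ⟨i, rfl⟩ | ⟨j, rfl⟩ <;> rcases hb with ⟨k, rfl⟩ | ⟨l, rfl⟩
  · rw [← SimpleGraph.mem_neighborSet, hN] at hab
    obtain ⟨j, hj⟩ := hab
    simpa using e.symm.injective (Subtype.ext hj)
  · exact hG'adj i l
  · exact (hG'adj k j).symm
  · exact absurd hab (not_adj_of_cliqueFree_three hG (hGadj 0 j) (hGadj 0 l))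

end CopyOfCompleteBipartite

/-- If `x ∈ p` were a common neighbour of `q`, the neighbours of `x` would lie in `q` or be common
neighbours of `q`, and triangle-freeness excludes the latter: too few for degree `n ≥ 3`. -/
lemma mem_of_pairStar_verts_eq (hG : G.CliqueFree 3) (hreg : ∀ v, (G.neighborSet v).ncard = n)
    (hn : 3 ≤ n) {p q : Sym2 V} (hp : p ∈ G.twinGraph.edgeSet)
    (hpq : (G.pairStar p).verts = (G.pairStar q).verts) {x : V} (hx : x ∈ p) : x ∈ q := by
  induction q using Sym2.ind with | _ a b
  have hxq : x ∈ (G.pairStar s(a, b)).verts := hpq ▸ mem_pairStar_verts.2 (.inl hx)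
  obtain hxq | ⟨hax, -⟩ : x ∈ s(a, b) ∨ G.Adj a x ∧ G.Adj b x := by
    simpa [mem_pairStar_verts] using hxq
  · exact hxq
  have hsub : G.neighborSet x ⊆ {a, b} := by
    intro z hz
    have hz' : z ∈ (G.pairStar s(a, b)).verts := hpq ▸ neighborSet_subset_pairStar_verts hp hx hz
    obtain h | ⟨haz, -⟩ : (z = a ∨ z = b) ∨ G.Adj a z ∧ G.Adj b z := by
      simpa [mem_pairStar_verts] using hz'
    · exact h
    · exact absurd hz (not_adj_of_cliqueFree_three hG hax haz)
  have h2 : ({a, b} : Set V).ncard ≤ 2 :=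
    (Set.ncard_insert_le a {b}).trans_eq (by rw [Set.ncard_singleton])
  have := hreg x ▸ Set.ncard_le_ncard hsub
  omega

lemma pairStar_injOn (hG : G.CliqueFree 3) (hreg : ∀ v, (G.neighborSet v).ncard = n)
    (hn : 3 ≤ n) : Set.InjOn G.pairStar G.twinGraph.edgeSet := by
  intro p hp q _ hpq
  induction p using Sym2.ind with | _ x y
  have hverts := congrArg Subgraph.verts hpq
  exact ((Sym2.mem_and_mem_iff hp.1).1
    ⟨mem_of_pairStar_verts_eq hG hreg hn hp hverts (Sym2.mem_mk_left x y),
      mem_of_pairStar_verts_eq hG hreg hn hp hverts (Sym2.mem_mk_right x y)⟩).symm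

lemma nonempty_iso_pairStar (hG : G.CliqueFree 3) (hreg : ∀ v, (G.neighborSet v).ncard = n)
    (hn : 0 < n) {p : Sym2 V} (hp : p ∈ G.twinGraph.edgeSet) :
    Nonempty ((G.pairStar p).coe ≃g completeBipartiteGraph (Fin 2) (Fin n)) := by
  induction p using Sym2.ind with | _ x y
  obtain ⟨hxy, hN⟩ := hp
  have : Finite (G.neighborSet x) := (Set.finite_of_ncard_pos (by rw [hreg]; exact hn)).to_subtype
  let leaf : Fin n ≃ G.neighborSet x :=
    (Finite.equivFinOfCardEq (by rw [Nat.card_coe_set_eq, hreg])).symm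
  have hadj (i : Fin 2) (j : Fin n) : G.Adj (![x, y] i) (leaf j) := by
    fin_cases i
    · exact (leaf j).2
    · simp [← mem_neighborSet, ← hN]
  have hleaf (i : Fin 2) (j : Fin n) : ![x, y] i ≠ leaf j := fun h => by
    have := hadj i j
    rw [← h] at this
    exact this.ne rfl
  let f : Copy (completeBipartiteGraph (Fin 2) (Fin n)) G :=
    ⟨⟨Sum.elim ![x, y] (fun j => leaf j), by
      rintro (i | j) (k | l) h
      · simp at h
      · exact hadj i l
      · exact (hadj k j).symm
      · simp at h⟩, by
      rintro (i | j) (k | l) h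
      · change ![x, y] i = ![x, y] k at h
        fin_cases i <;> fin_cases k <;> simp_all [hxy.symm]
      · exact absurd h (hleaf i l)
      · exact absurd h.symm (hleaf k j)
      · exact congrArg Sum.inr (leaf.injective (Subtype.ext h))⟩
  have h : f.toSubgraph = G.pairStar s(x, y) :=
    Subgraph.eq_pairStar_of_iso f.isoToSubgraph.symm hreg hn hG
  rw [← h]
  exact ⟨f.isoToSubgraph.symm⟩

theorem copyCount_completeBipartiteGraph_two (hG : G.CliqueFree 3)
    (hreg : ∀ v, (G.neighborSet v).ncard = n) (hn : 3 ≤ n) :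
    _root_.copyCount (completeBipartiteGraph (Fin 2) (Fin n)) G =
      Nat.card G.twinGraph.edgeSet := by
  refine (Nat.card_congr (Equiv.ofBijective (fun p : G.twinGraph.edgeSet =>
    (⟨G.pairStar p, nonempty_iso_pairStar hG hreg (by omega) p.2⟩ :
      {G' : G.Subgraph // Nonempty (G'.coe ≃g _)})) ⟨?_, ?_⟩)).symm
  · exact fun p q h => Subtype.ext (pairStar_injOn hG hreg hn p.2 q.2 (congrArg Subtype.val h))
  · rintro ⟨G', ⟨e⟩⟩
    exact ⟨⟨_, Subgraph.mk_mem_edgeSet_twinGraph_of_iso e hreg (by omega)⟩,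
      Subtype.ext (Subgraph.eq_pairStar_of_iso e hreg (by omega) hG).symm⟩

lemma ncard_edgeSet_add_ncard_edgeSet_compl [Finite V] :
    G.edgeSet.ncard + Gᶜ.edgeSet.ncard = (Nat.card V).choose 2 := by
  classical
  have := Fintype.ofFinite V
  rw [← Set.ncard_union_eq (disjoint_edgeSet.2 disjoint_compl_right), ← edgeSet_sup,
    sup_compl_eq_top, ← coe_edgeFinset, Set.ncard_coe_finset,
    card_edgeFinset_top_eq_card_choose_two, Nat.card_eq_fintype_card]

section CompleteBipartite

variable {α β : Type*}

lemma completeBipartiteGraph_adj_iff_isLeft_ne {x y : α ⊕ β} :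
    (completeBipartiteGraph α β).Adj x y ↔ x.isLeft ≠ y.isLeft := by
  cases x <;> cases y <;> simp

lemma isFFree_K2rpq_completeBipartiteGraph [Finite α] [Finite β] {p q r : ℕ} (hr : 0 < r)
    (hα : Nat.card α < r + p + q) (hβ : Nat.card β < r + p + q) :
    IsFFree (K2rpq p q r) (completeBipartiteGraph α β) := by
  rintro ⟨f, hf, hadj⟩
  have side {a b} (h : (K2rpq p q r).Adj a b) : (f a).isLeft ≠ (f b).isLeft :=
    completeBipartiteGraph_adj_iff_isLeft_ne.1 (hadj h)
  have hv : (f (.inl 1)).isLeft = (f (.inl 0)).isLeft := by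
    have h0 := side (a := .inl 0) (b := .inr (.inl ⟨0, hr⟩)) (by simp [K2rpq, K2rpqRel])
    have h1 := side (a := .inl 1) (b := .inr (.inl ⟨0, hr⟩)) (by simp [K2rpq, K2rpqRel])
    revert h0 h1
    cases (f (.inl 0)).isLeft <;> cases (f (.inl 1)).isLeft <;> simp
  have hu : ∀ x, (f (.inr x)).isLeft ≠ (f (.inl 0)).isLeft := by
    rintro (x | x | x) <;> refine fun h => ?_
    · exact side (a := .inl 0) (b := .inr (.inl x)) (by simp [K2rpq, K2rpqRel]) h.symm
    · exact side (a := .inl 0) (b := .inr (.inr (.inl x))) (by simp [K2rpq, K2rpqRel]) h.symm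
    · exact side (a := .inl 1) (b := .inr (.inr (.inr x))) (by simp [K2rpq, K2rpqRel])
        (hv ▸ h.symm)
  have hcard (P : α ⊕ β → Prop) (hP : ∀ x, P (f (.inr x))) : r + p + q ≤ Nat.card {y // P y} := by
    have := Nat.card_le_card_of_injective (fun x => (⟨f (.inr x), hP x⟩ : {y // P y}))
      fun x y h => Sum.inr_injective (hf (congrArg Subtype.val h))
    simpa [Nat.card_sum, add_assoc] using this
  cases hs : (f (.inl 0)).isLeft
  · have := hcard (fun y => y.isLeft) (by simpa [hs] using hu)
    rw [Nat.card_congr Equiv.sumIsLeft] at this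
    omega
  · have := hcard (fun y => y.isRight) (by simpa [hs] using hu)
    rw [Nat.card_congr Equiv.sumIsRight] at this
    omega

lemma completeBipartiteGraph_cliqueFree_three : (completeBipartiteGraph α β).CliqueFree 3 :=
  (CompleteBipartiteGraph.bicoloring α β).colorable.cliqueFree (by simp)

lemma twinGraph_completeBipartiteGraph :
    (completeBipartiteGraph α β).twinGraph = (completeBipartiteGraph α β)ᶜ := by
  refine le_antisymm twinGraph_le_compl fun x y ⟨hxy, hnadj⟩ => ⟨hxy, ?_⟩
  rw [completeBipartiteGraph_adj_iff_isLeft_ne, not_not] at hnadj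
  ext z
  simp only [mem_neighborSet, completeBipartiteGraph_adj_iff_isLeft_ne, hnadj]

lemma ncard_neighborSet_completeBipartiteGraph_inl (a : α) :
    ((completeBipartiteGraph α β).neighborSet (.inl a)).ncard = Nat.card β := by
  have : (completeBipartiteGraph α β).neighborSet (.inl a) = Set.range Sum.inr := by
    ext (_ | _) <;> simp
  rw [this, Set.ncard_range_of_injective Sum.inr_injective]

lemma ncard_neighborSet_completeBipartiteGraph_inr (b : β) :
    ((completeBipartiteGraph α β).neighborSet (.inr b)).ncard = Nat.card α := by
  have : (completeBipartiteGraph α β).neighborSet (.inr b) = Set.range Sum.inl := by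
    ext (_ | _) <;> simp
  rw [this, Set.ncard_range_of_injective Sum.inl_injective]

lemma ncard_edgeSet_completeBipartiteGraph [Finite α] [Finite β] :
    (completeBipartiteGraph α β).edgeSet.ncard = Nat.card α * Nat.card β := by
  rw [Set.ncard_def, encard_edgeSet_completeBipartiteGraph, ENat.card_eq_coe_natCard,
    ENat.card_eq_coe_natCard]
  rfl

lemma ncard_edgeSet_compl_completeBipartiteGraph [Finite α] [Finite β] :
    (completeBipartiteGraph α β)ᶜ.edgeSet.ncard =
      (Nat.card α).choose 2 + (Nat.card β).choose 2 := by
  have h := ncard_edgeSet_add_ncard_edgeSet_compl (G := completeBipartiteGraph α β)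
  have hchoose (a b : ℕ) : (a + b).choose 2 = a.choose 2 + a * b + b.choose 2 := by
    simp only [Nat.add_choose_eq, Finset.Nat.sum_antidiagonal_succ, Nat.choose_zero_right,
      Nat.choose_one_right, Finset.HasAntidiagonal.antidiagonal_zero, Finset.sum_singleton,
      Nat.reduceAdd, zero_add, one_mul, mul_one]
    ring
  rw [ncard_edgeSet_completeBipartiteGraph, Nat.card_sum, hchoose] at h
  omega

end CompleteBipartite

theorem copyCount_completeBipartiteGraph_two_completeBipartiteGraph (hn : 3 ≤ n) :
    _root_.copyCount (completeBipartiteGraph (Fin 2) (Fin n))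
      (completeBipartiteGraph (Fin n) (Fin n)) = 2 * n.choose 2 := by
  have hreg : ∀ v, ((completeBipartiteGraph (Fin n) (Fin n)).neighborSet v).ncard = n := by
    rintro (a | b)
    · simpa using ncard_neighborSet_completeBipartiteGraph_inl (β := Fin n) a
    · simpa using ncard_neighborSet_completeBipartiteGraph_inr (α := Fin n) b
  rw [copyCount_completeBipartiteGraph_two completeBipartiteGraph_cliqueFree_three hreg hn,
    twinGraph_completeBipartiteGraph, Nat.card_coe_set_eq,
    ncard_edgeSet_compl_completeBipartiteGraph, Nat.card_fin, two_mul]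

end SimpleGraph

theorem stmt16 :
    IsFFree (K2rpq 3 3 2) (completeBipartiteGraph (Fin 7) (Fin 7)) ∧
    _root_.copyCount (completeBipartiteGraph (Fin 2) (Fin 7))
        (completeBipartiteGraph (Fin 7) (Fin 7)) = 42 ∧
    42 ≤ exNum 14 (completeBipartiteGraph (Fin 2) (Fin 7)) (K2rpq 3 3 2) := by
  have hfree : IsFFree (K2rpq 3 3 2) (completeBipartiteGraph (Fin 7) (Fin 7)) :=
    isFFree_K2rpq_completeBipartiteGraph (by norm_num) (by simp) (by simp)
  have hcount : _root_.copyCount (completeBipartiteGraph (Fin 2) (Fin 7))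
      (completeBipartiteGraph (Fin 7) (Fin 7)) = 42 :=
    copyCount_completeBipartiteGraph_two_completeBipartiteGraph (by norm_num)
  refine ⟨hfree, hcount, ?_⟩
  simpa [hcount] using copyCount_le_exNum (H := completeBipartiteGraph (Fin 2) (Fin 7)) hfree
end
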